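/- (Corollary 1.) Let N_t = 2 and let H be a random N_r × 2 complex matrix whose entries are i.i.d. standard complex Gaussian (real and imaginary parts independent N(0, 1/2)). For the four BPSK symbol vectors x ∈ {−1, +1}², define d_min = min_{i ≠ j} ‖Q_c(H x_i) − Q_c(H x_j)‖_0. Then for every integer n ≥ 0, P( d_min ≥ n ) = Σ_{k=n}^{2N_r − n} binom(2N_r, k) · 2^{−2N_r} (with the convention that the sum is 0 when n > N_r). -/

import Mathlib

open MeasureTheory ProbabilityTheory

/-- One-bit quantizer: `sgn x = +1` if `x > 0`, and `−1` otherwise. -/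
noncomputable def sgn (x : ℝ) : ℝ := if 0 < x then 1 else -1

/-- The stacked real representation `(Re(Hx), Im(Hx)) ∈ ℝ^{2N_r}` of the noiseless
received signal, where the random channel matrix `H` (here `N_t = 2`) has entry `(i,j)`
equal to `ω(i,j,false) + ω(i,j,true)·I`. -/
noncomputable def stackedRecv (Nr : ℕ) (ω : Fin Nr × Fin 2 × Bool → ℝ)
    (x : Fin 2 → ℝ) : Fin Nr ⊕ Fin Nr → ℝ :=
  Sum.elim
    (fun i => (∑ j, ((ω (i, j, false) : ℂ) + (ω (i, j, true) : ℂ) * Complex.I) *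
      (x j : ℂ)).re)
    (fun i => (∑ j, ((ω (i, j, false) : ℂ) + (ω (i, j, true) : ℂ) * Complex.I) *
      (x j : ℂ)).im)

/-- The one-bit quantized noiseless received signal `Q_c(Hx) ∈ {−1,+1}^{2N_r}`. -/
noncomputable def quantRecv (Nr : ℕ) (ω : Fin Nr × Fin 2 × Bool → ℝ)
    (x : Fin 2 → ℝ) : Fin Nr ⊕ Fin Nr → ℝ :=
  fun l => sgn (stackedRecv Nr ω x l)

/-- The minimum Hamming distance of the code `{Q_c(Hx) : x ∈ {−1,+1}²}` formed by the
one-bit quantized noiseless received signals of the four BPSK symbol vectors. -/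
noncomputable def dmin (Nr : ℕ) (ω : Fin Nr × Fin 2 × Bool → ℝ) : ℕ :=
  sInf {d : ℕ | ∃ x₁ x₂ : Fin 2 → ℝ, (∀ j, x₁ j = 1 ∨ x₁ j = -1) ∧
    (∀ j, x₂ j = 1 ∨ x₂ j = -1) ∧ x₁ ≠ x₂ ∧
    d = hammingDist (quantRecv Nr ω x₁) (quantRecv Nr ω x₂)}

open scoped ENNReal

namespace DminCor

noncomputable abbrev gν : Measure ℝ := gaussianReal 0 (1 / 2 : NNReal)
noncomputable abbrev gν2 : Measure (ℝ × ℝ) := gν.prod gν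

lemma gν_singleton (a : ℝ) : gν {a} = 0 :=
  gaussianReal_absolutelyContinuous 0 (by norm_num) Real.volume_singleton

lemma gν2_graph {c : ℝ → ℝ} (hc : Measurable c) : gν2 {p : ℝ × ℝ | p.2 = c p.1} = 0 := by
  have hm : MeasurableSet {p : ℝ × ℝ | p.2 = c p.1} :=
    measurableSet_eq_fun measurable_snd (hc.comp measurable_fst)
  rw [Measure.prod_apply hm]
  have h : ∀ a : ℝ, gν (Prod.mk a ⁻¹' {p : ℝ × ℝ | p.2 = c p.1}) = 0 := by
    intro a
    have : (Prod.mk a ⁻¹' {p : ℝ × ℝ | p.2 = c p.1}) = {c a} := by ext b; simp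
    rw [this]; exact gν_singleton _
  simp only [h]
  simp

/-- the "signs differ" comparison as a Bool -/
noncomputable def ψb (p : ℝ × ℝ) : Bool := decide (¬((0 < p.1 + p.2) ↔ (0 < p.1 - p.2)))

lemma psi_true_eq : ψb ⁻¹' {true} = {p : ℝ × ℝ | ¬((0 < p.1 + p.2) ↔ (0 < p.1 - p.2))} := by
  ext p; simp [ψb]

lemma psi_false_eq : ψb ⁻¹' {false} = (ψb ⁻¹' {true})ᶜ := by
  ext p; cases h : ψb p <;> simp [h]

lemma measSet_psi (c : Bool) : MeasurableSet (ψb ⁻¹' {c}) := by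
  have hU : MeasurableSet {p : ℝ × ℝ | 0 < p.1 + p.2} :=
    measurableSet_lt measurable_const (measurable_fst.add measurable_snd)
  have hV : MeasurableSet {p : ℝ × ℝ | 0 < p.1 - p.2} :=
    measurableSet_lt measurable_const (measurable_fst.sub measurable_snd)
  have ht : MeasurableSet (ψb ⁻¹' {true}) := by
    rw [psi_true_eq]
    have : {p : ℝ × ℝ | ¬((0 < p.1 + p.2) ↔ (0 < p.1 - p.2))}
        = ({p : ℝ × ℝ | 0 < p.1 + p.2} \ {p : ℝ × ℝ | 0 < p.1 - p.2}) ∪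
          ({p : ℝ × ℝ | 0 < p.1 - p.2} \ {p : ℝ × ℝ | 0 < p.1 + p.2}) := by
      ext p
      by_cases h1 : 0 < p.1 + p.2 <;> by_cases h2 : 0 < p.1 - p.2 <;> simp [h1, h2]
    rw [this]; exact (hU.diff hV).union (hV.diff hU)
  cases c
  · rw [psi_false_eq]; exact ht.compl
  · exact ht

lemma measurable_psi : Measurable ψb := measurable_to_countable' measSet_psi

lemma sign_iff_of_absgt {a b : ℝ} (h : |b| < |a|) : (0 < a + b ↔ 0 < a - b) := by
  rcases abs_lt.mp h with ⟨h1, h2⟩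
  rcases lt_or_ge 0 a with ha | ha
  · rw [abs_of_pos ha] at h1 h2; constructor <;> intro <;> linarith
  · have ha' : a < 0 := by
      rcases lt_or_eq_of_le ha with h' | h'
      · exact h'
      · exfalso; rw [h'] at h; simp at h; exact absurd h (not_lt.mpr (abs_nonneg b))
    rw [abs_of_neg ha'] at h1 h2
    constructor <;> intro <;> linarith

lemma sign_xor_of_abslt {a b : ℝ} (h : |a| < |b|) : ¬(0 < a + b ↔ 0 < a - b) := by
  rcases abs_lt.mp h with ⟨h1, h2⟩
  rcases lt_or_ge 0 b with hb | hb
  · rw [abs_of_pos hb] at h1 h2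
    intro hiff
    have h3 : 0 < a + b := by linarith
    have := hiff.mp h3
    linarith
  · have hb' : b < 0 := by
      rcases lt_or_eq_of_le hb with h' | h'
      · exact h'
      · exfalso; rw [h'] at h; simp at h; exact absurd h (not_lt.mpr (abs_nonneg a))
    rw [abs_of_neg hb'] at h1 h2
    intro hiff
    have h3 : 0 < a - b := by linarith
    have := hiff.mpr h3
    linarith

lemma psi_half (c : Bool) : gν2 (ψb ⁻¹' {c}) = 2⁻¹ := by
  set S : Set (ℝ × ℝ) := {p | |p.1| < |p.2|} with hS
  set S' : Set (ℝ × ℝ) := {p | |p.2| < |p.1|} with hS'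
  set D : Set (ℝ × ℝ) := {p | |p.1| = |p.2|} with hDdef
  have hSm : MeasurableSet S := measurableSet_lt measurable_fst.abs measurable_snd.abs
  have hS'm : MeasurableSet S' := measurableSet_lt measurable_snd.abs measurable_fst.abs
  have hD : gν2 D = 0 := by
    have hsub : D ⊆ {p : ℝ × ℝ | p.2 = p.1} ∪ {p : ℝ × ℝ | p.2 = -p.1} := by
      intro p hp
      rcases abs_eq_abs.mp (hDdef ▸ hp).symm with h | h
      · exact Or.inl h
      · exact Or.inr h
    refine measure_mono_null hsub ?_
    have h1 : gν2 {p : ℝ × ℝ | p.2 = p.1} = 0 := gν2_graph measurable_id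
    have h2 : gν2 {p : ℝ × ℝ | p.2 = -p.1} = 0 := gν2_graph measurable_neg
    exact measure_union_null h1 h2
  have hswap : gν2 S = gν2 S' := by
    have h1 : gν2 S = (Measure.map Prod.swap gν2) S := by rw [Measure.prod_swap]
    have hpre : Prod.swap ⁻¹' S = S' := by
      ext p; simp [hS, hS', Prod.swap]
    rw [h1, Measure.map_apply measurable_swap hSm, hpre]
  have hone : gν2 S + gν2 S' = 1 := by
    have hdisj : Disjoint S S' := by
      rw [Set.disjoint_left]; intro p h1 h2
      rw [hS, Set.mem_setOf_eq] at h1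
      rw [hS', Set.mem_setOf_eq] at h2
      exact absurd (lt_trans h1 h2) (lt_irrefl _)
    have hu : gν2 (S ∪ S') = gν2 S + gν2 S' := measure_union hdisj hS'm
    have h3 : gν2 (S ∪ S') = 1 := by
      refine le_antisymm prob_le_one ?_
      have huniv : S ∪ S' ∪ D = Set.univ := by
        ext p
        simp only [Set.mem_union, Set.mem_setOf_eq, Set.mem_univ, iff_true, hS, hS', hDdef]
        rcases lt_trichotomy (|p.1|) (|p.2|) with h | h | h
        · exact Or.inl (Or.inl h)
        · exact Or.inr h
        · exact Or.inl (Or.inr h)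
      calc (1 : ℝ≥0∞) = gν2 (S ∪ S' ∪ D) := by rw [huniv]; exact measure_univ.symm
        _ ≤ gν2 (S ∪ S') + gν2 D := measure_union_le _ _
        _ = gν2 (S ∪ S') := by rw [hD, add_zero]
    rw [← hu, h3]
  have hShalf : gν2 S = 2⁻¹ := by
    have h2 : 2 * gν2 S = 1 := by rw [two_mul]; nth_rewrite 2 [hswap]; exact hone
    calc gν2 S = 2⁻¹ * (2 * gν2 S) := by
          rw [← mul_assoc, ENNReal.inv_mul_cancel two_ne_zero ENNReal.ofNat_ne_top, one_mul]
      _ = 2⁻¹ := by rw [h2, mul_one]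
  have htrue : gν2 (ψb ⁻¹' {true}) = 2⁻¹ := by
    have hsub1 : ψb ⁻¹' {true} ⊆ S ∪ D := by
      intro p hp
      rw [psi_true_eq] at hp
      rcases lt_trichotomy (|p.1|) (|p.2|) with h | h | h
      · exact Or.inl h
      · exact Or.inr h
      · exact absurd (sign_iff_of_absgt h) hp
    have hsub2 : S ⊆ ψb ⁻¹' {true} := by
      intro p hp
      rw [psi_true_eq]
      exact sign_xor_of_abslt hp
    refine le_antisymm ?_ ?_
    · calc gν2 (ψb ⁻¹' {true}) ≤ gν2 (S ∪ D) := measure_mono hsub1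
        _ ≤ gν2 S + gν2 D := measure_union_le _ _
        _ = 2⁻¹ := by rw [hD, add_zero, hShalf]
    · rw [← hShalf]; exact measure_mono hsub2
  cases c
  · rw [psi_false_eq, measure_compl (measSet_psi true) (measure_ne_top _ _), htrue,
      measure_univ, ENNReal.one_sub_inv_two]
  · exact htrue


variable {Nr : ℕ}

abbrev Idx (Nr : ℕ) := Fin Nr ⊕ Fin Nr

def eIdx (Nr : ℕ) : (Idx Nr ⊕ Idx Nr) ≃ Fin Nr × Fin 2 × Bool where
  toFun := Sum.elim (Sum.elim (fun i => (i, 0, false)) (fun i => (i, 0, true)))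
                    (Sum.elim (fun i => (i, 1, false)) (fun i => (i, 1, true)))
  invFun p := if p.2.1 = 0 then (if p.2.2 then .inl (.inr p.1) else .inl (.inl p.1))
              else (if p.2.2 then .inr (.inr p.1) else .inr (.inl p.1))
  left_inv s := by rcases s with (i | i) | (i | i) <;> simp
  right_inv p := by
    obtain ⟨i, j, t⟩ := p
    fin_cases j <;> cases t <;> simp

noncomputable def Φm (Nr : ℕ) : (Fin Nr × Fin 2 × Bool → ℝ) → (Idx Nr → ℝ × ℝ) :=
  fun ω l => (ω (eIdx Nr (.inl l)), ω (eIdx Nr (.inr l)))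

lemma measurePreserving_Φm :
    MeasurePreserving (Φm Nr) (Measure.pi fun _ : Fin Nr × Fin 2 × Bool => gν)
      (Measure.pi fun _ : Idx Nr => gν2) := by
  have h1 := (measurePreserving_piCongrLeft (fun _ : Fin Nr × Fin 2 × Bool => gν) (eIdx Nr)).symm
  have h2 := measurePreserving_sumPiEquivProdPi (fun _ : Idx Nr ⊕ Idx Nr => gν)
  have h3 := (measurePreserving_arrowProdEquivProdArrow ℝ ℝ (Idx Nr)
    (fun _ => gν) (fun _ => gν)).symm
  have hc := h3.comp (h2.comp h1)
  have heq : Φm Nr = (⇑(MeasurableEquiv.arrowProdEquivProdArrow ℝ ℝ (Idx Nr)).symm) ∘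
      (⇑(MeasurableEquiv.sumPiEquivProdPi (fun _ : Idx Nr ⊕ Idx Nr => ℝ))) ∘
      (⇑(MeasurableEquiv.piCongrLeft (fun _ => ℝ) (eIdx Nr)).symm) := by
    funext ω
    funext l
    rfl
  rw [heq]; exact hc

lemma measure_coord_event {Z : Set (ℝ × ℝ)} (hZ : MeasurableSet Z) (l : Idx Nr) :
    (Measure.pi fun _ : Idx Nr => gν2) {g : Idx Nr → ℝ × ℝ | g l ∈ Z} = gν2 Z := by
  classical
  have h : {g : Idx Nr → ℝ × ℝ | g l ∈ Z}
      = Set.pi Set.univ (Function.update (fun _ => Set.univ) l Z) := by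
    ext g
    simp only [Set.mem_setOf_eq, Set.mem_pi, Set.mem_univ, forall_true_left]
    constructor
    · intro h l'
      by_cases h' : l' = l
      · subst h'; rw [Function.update_self]; exact h
      · rw [Function.update_of_ne h']; trivial
    · intro h; have := h l; rwa [Function.update_self] at this
  rw [h, Measure.pi_pi]
  rw [Finset.prod_eq_single l (fun b _ hb => by rw [Function.update_of_ne hb]; exact measure_univ)
    (by simp)]
  rw [Function.update_self]

lemma coord_set_measurable {Z : Set (ℝ × ℝ)} (hZ : MeasurableSet Z) (l : Idx Nr) :
    MeasurableSet {g : Idx Nr → ℝ × ℝ | g l ∈ Z} :=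
  measurable_pi_apply l hZ

lemma null_sum (l : Idx Nr) :
    (Measure.pi fun _ : Fin Nr × Fin 2 × Bool => gν)
      {ω | (Φm Nr ω l).1 + (Φm Nr ω l).2 = 0} = 0 := by
  have hZ : MeasurableSet {p : ℝ × ℝ | p.1 + p.2 = 0} :=
    measurableSet_eq_fun (measurable_fst.add measurable_snd) measurable_const
  have h : {ω | (Φm Nr ω l).1 + (Φm Nr ω l).2 = 0}
      = Φm Nr ⁻¹' {g : Idx Nr → ℝ × ℝ | g l ∈ {p : ℝ × ℝ | p.1 + p.2 = 0}} := rfl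
  rw [h, measurePreserving_Φm.measure_preimage (coord_set_measurable hZ l).nullMeasurableSet,
    measure_coord_event hZ]
  have h2 : {p : ℝ × ℝ | p.1 + p.2 = 0} = {p : ℝ × ℝ | p.2 = -p.1} := by
    ext p
    constructor <;> intro hx <;> simp only [Set.mem_setOf_eq] at * <;> linarith
  rw [h2]; exact gν2_graph measurable_neg

lemma null_diff (l : Idx Nr) :
    (Measure.pi fun _ : Fin Nr × Fin 2 × Bool => gν)
      {ω | (Φm Nr ω l).1 - (Φm Nr ω l).2 = 0} = 0 := by
  have hZ : MeasurableSet {p : ℝ × ℝ | p.1 - p.2 = 0} :=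
    measurableSet_eq_fun (measurable_fst.sub measurable_snd) measurable_const
  have h : {ω | (Φm Nr ω l).1 - (Φm Nr ω l).2 = 0}
      = Φm Nr ⁻¹' {g : Idx Nr → ℝ × ℝ | g l ∈ {p : ℝ × ℝ | p.1 - p.2 = 0}} := rfl
  rw [h, measurePreserving_Φm.measure_preimage (coord_set_measurable hZ l).nullMeasurableSet,
    measure_coord_event hZ]
  have h2 : {p : ℝ × ℝ | p.1 - p.2 = 0} = {p : ℝ × ℝ | p.2 = p.1} := by
    ext p
    constructor <;> intro hx <;> simp only [Set.mem_setOf_eq] at * <;> linarith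
  rw [h2]; exact gν2_graph measurable_id

lemma sgn_vals (x : ℝ) : sgn x = 1 ∨ sgn x = -1 := by unfold sgn; split <;> simp

lemma sgn_eq_iff {a b : ℝ} : sgn a = sgn b ↔ ((0 < a) ↔ (0 < b)) := by
  unfold sgn
  by_cases ha : 0 < a <;> by_cases hb : 0 < b <;> simp [ha, hb] <;> norm_num

lemma sgn_ne_iff {a b : ℝ} : sgn a ≠ sgn b ↔ ¬((0 < a) ↔ (0 < b)) := not_congr sgn_eq_iff

lemma sgn_neg_of_ne {x : ℝ} (hx : x ≠ 0) : sgn (-x) = -sgn x := by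
  unfold sgn
  rcases lt_trichotomy x 0 with h | h | h
  · rw [if_pos (by linarith), if_neg (by linarith)]; norm_num
  · exact absurd h hx
  · rw [if_neg (by linarith), if_pos h]

lemma sgn_ne_neg_self (x : ℝ) : sgn x ≠ -sgn x := by
  rcases sgn_vals x with h | h <;> rw [h] <;> norm_num

lemma sgn_ne_neg_iff (a b : ℝ) : (sgn a ≠ -sgn b) ↔ sgn a = sgn b := by
  rcases sgn_vals a with h | h <;> rcases sgn_vals b with h' | h' <;> rw [h, h'] <;> norm_num

lemma stacked_eval (ω : Fin Nr × Fin 2 × Bool → ℝ) (x : Fin 2 → ℝ) (l : Idx Nr) :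
    stackedRecv Nr ω x l = (Φm Nr ω l).1 * x 0 + (Φm Nr ω l).2 * x 1 := by
  cases l with
  | inl i =>
      simp only [stackedRecv, Φm, eIdx, Sum.elim_inl, Sum.elim_inr, Equiv.coe_fn_mk,
        Fin.sum_univ_two, Complex.add_re, Complex.mul_re, Complex.add_im, Complex.mul_im,
        Complex.ofReal_re, Complex.ofReal_im, Complex.I_re, Complex.I_im]
      ring
  | inr i =>
      simp only [stackedRecv, Φm, eIdx, Sum.elim_inl, Sum.elim_inr, Equiv.coe_fn_mk,
        Fin.sum_univ_two, Complex.add_re, Complex.mul_re, Complex.add_im, Complex.mul_im,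
        Complex.ofReal_re, Complex.ofReal_im, Complex.I_re, Complex.I_im]
      ring

lemma quant_eval (ω : Fin Nr × Fin 2 × Bool → ℝ) (x : Fin 2 → ℝ) (l : Idx Nr) :
    quantRecv Nr ω x l = sgn ((Φm Nr ω l).1 * x 0 + (Φm Nr ω l).2 * x 1) := by
  rw [quantRecv, stacked_eval]

/-- the Bernoulli bits extracted from the channel realization -/
noncomputable def φB (Nr : ℕ) (ω : Fin Nr × Fin 2 × Bool → ℝ) : Idx Nr → Bool :=
  fun l => ψb (Φm Nr ω l)

noncomputable def cnt (f : Idx Nr → Bool) : ℕ :=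
  (Finset.univ.filter fun l => f l = true).card

lemma cnt_le (f : Idx Nr → Bool) : cnt f ≤ Nr + Nr := by
  calc cnt f ≤ Finset.univ.card := Finset.card_filter_le _ _
    _ = Nr + Nr := by
        rw [Finset.card_univ]
        simp [Fintype.card_sum]

/-- the good event: no quantizer input is exactly zero -/
def Gset (Nr : ℕ) : Set (Fin Nr × Fin 2 × Bool → ℝ) :=
  {ω | ∀ l : Idx Nr, (Φm Nr ω l).1 + (Φm Nr ω l).2 ≠ 0 ∧ (Φm Nr ω l).1 - (Φm Nr ω l).2 ≠ 0}

lemma dmin_eq_on_G {ω : Fin Nr × Fin 2 × Bool → ℝ} (hω : ω ∈ Gset Nr) :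
    dmin Nr ω = min (cnt (φB Nr ω)) ((Nr + Nr) - cnt (φB Nr ω)) := by
  classical
  set u : Idx Nr → ℝ := fun l => (Φm Nr ω l).1 + (Φm Nr ω l).2 with hu
  set v : Idx Nr → ℝ := fun l => (Φm Nr ω l).1 - (Φm Nr ω l).2 with hv
  have hu0 : ∀ l, u l ≠ 0 := fun l => (hω l).1
  have hv0 : ∀ l, v l ≠ 0 := fun l => (hω l).2
  set s : Idx Nr → ℝ := fun l => sgn (u l) with hs
  set t : Idx Nr → ℝ := fun l => sgn (v l) with ht
  set K : ℕ := cnt (φB Nr ω) with hK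
  -- quantizer evaluations
  have q11 : ∀ x : Fin 2 → ℝ, x 0 = 1 → x 1 = 1 → quantRecv Nr ω x = s := by
    intro x h0 h1; funext l
    rw [quant_eval, h0, h1]
    exact congrArg sgn (by simp only [hu]; ring)
  have q1m : ∀ x : Fin 2 → ℝ, x 0 = 1 → x 1 = -1 → quantRecv Nr ω x = t := by
    intro x h0 h1; funext l
    rw [quant_eval, h0, h1]
    exact congrArg sgn (by simp only [hv]; ring)
  have qm1 : ∀ x : Fin 2 → ℝ, x 0 = -1 → x 1 = 1 → quantRecv Nr ω x = fun l => -(t l) := by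
    intro x h0 h1; funext l
    rw [quant_eval, h0, h1]
    have harg : (Φm Nr ω l).1 * (-1) + (Φm Nr ω l).2 * 1 = -(v l) := by simp only [hv]; ring
    rw [harg, sgn_neg_of_ne (hv0 l)]
  have qmm : ∀ x : Fin 2 → ℝ, x 0 = -1 → x 1 = -1 → quantRecv Nr ω x = fun l => -(s l) := by
    intro x h0 h1; funext l
    rw [quant_eval, h0, h1]
    have harg : (Φm Nr ω l).1 * (-1) + (Φm Nr ω l).2 * (-1) = -(u l) := by simp only [hu]; ring
    rw [harg, sgn_neg_of_ne (hu0 l)]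
  -- Hamming distance computations
  have hcardU : (Finset.univ : Finset (Idx Nr)).card = Nr + Nr := by
    rw [Finset.card_univ]; simp [Fintype.card_sum]
  have hA : hammingDist s t = K := by
    rw [hammingDist, hK, cnt]
    congr 1
    apply Finset.filter_congr
    intro l _
    simp only [φB, ψb, decide_eq_true_eq, hs, ht]
    exact ⟨fun h => sgn_ne_iff.mp h, fun h => sgn_ne_iff.mpr h⟩
  have hKle : K ≤ Nr + Nr := cnt_le _
  have hcompl : (Finset.univ.filter fun l => s l = t l).card = (Nr + Nr) - K := by
    have := Finset.card_filter_add_card_filter_not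
      (s := (Finset.univ : Finset (Idx Nr))) (fun l => s l ≠ t l)
    rw [hcardU] at this
    have h2 : (Finset.univ.filter fun l => ¬ s l ≠ t l) =
        (Finset.univ.filter fun l => s l = t l) := by
      apply Finset.filter_congr; intro l _; simp
    rw [h2] at this
    have h3 : (Finset.univ.filter fun l => s l ≠ t l).card = K := by
      rw [← hA]; rfl
    omega
  have hB : hammingDist s (fun l => -(t l)) = (Nr + Nr) - K := by
    rw [hammingDist, ← hcompl]
    congr 1
    apply Finset.filter_congr
    intro l _
    simpa using sgn_ne_neg_iff (u l) (v l)
  have hC : hammingDist s (fun l => -(s l)) = Nr + Nr := by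
    rw [hammingDist, ← hcardU]
    congr 1
    rw [Finset.filter_true_of_mem]
    intro l _
    exact sgn_ne_neg_self (u l)
  have hD : hammingDist t (fun l => -(t l)) = Nr + Nr := by
    rw [hammingDist, ← hcardU]
    congr 1
    rw [Finset.filter_true_of_mem]
    intro l _
    exact sgn_ne_neg_self (v l)
  have hE : hammingDist t (fun l => -(s l)) = (Nr + Nr) - K := by
    rw [hammingDist, ← hcompl]
    congr 1
    apply Finset.filter_congr
    intro l _
    constructor
    · intro h
      exact ((sgn_ne_neg_iff (v l) (u l)).mp h).symm
    · intro h
      exact (sgn_ne_neg_iff (v l) (u l)).mpr h.symm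
  have hF : hammingDist (fun l => -(t l)) (fun l => -(s l)) = K := by
    rw [hammingDist, ← hA, hammingDist]
    congr 1
    apply Finset.filter_congr
    intro l _
    simp only [neg_inj, ne_eq]
    exact ⟨fun h h2 => h h2.symm, fun h h2 => h h2.symm⟩
  -- the distance set
  set S : Set ℕ := {d : ℕ | ∃ x₁ x₂ : Fin 2 → ℝ, (∀ j, x₁ j = 1 ∨ x₁ j = -1) ∧
    (∀ j, x₂ j = 1 ∨ x₂ j = -1) ∧ x₁ ≠ x₂ ∧
    d = hammingDist (quantRecv Nr ω x₁) (quantRecv Nr ω x₂)} with hSdef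
  have bpsk11 : ∀ j, (![(1 : ℝ), 1]) j = 1 ∨ (![(1 : ℝ), 1]) j = -1 := by
    intro j; fin_cases j <;> simp
  have bpsk1m : ∀ j, (![(1 : ℝ), -1]) j = 1 ∨ (![(1 : ℝ), -1]) j = -1 := by
    intro j; fin_cases j <;> simp
  have bpskm1 : ∀ j, (![(-1 : ℝ), 1]) j = 1 ∨ (![(-1 : ℝ), 1]) j = -1 := by
    intro j; fin_cases j <;> simp
  have mem1 : K ∈ S := by
    refine ⟨![1, 1], ![1, -1], bpsk11, bpsk1m, ?_, ?_⟩
    · intro h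
      have := congrFun h 1
      norm_num at this
    · rw [q11 _ (by simp) (by simp), q1m _ (by simp) (by simp), hA]
  have mem2 : (Nr + Nr) - K ∈ S := by
    refine ⟨![1, 1], ![-1, 1], bpsk11, bpskm1, ?_, ?_⟩
    · intro h
      have := congrFun h 0
      norm_num at this
    · rw [q11 _ (by simp) (by simp), qm1 _ (by simp) (by simp), hB]
  have lb : ∀ d ∈ S, min K ((Nr + Nr) - K) ≤ d := by
    rintro d ⟨x₁, x₂, h1, h2, hne, rfl⟩
    rcases h1 0 with e10 | e10 <;> rcases h1 1 with e11 | e11 <;>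
      rcases h2 0 with e20 | e20 <;> rcases h2 1 with e21 | e21
    · refine absurd (funext fun j => ?_) hne
      fin_cases j
      · exact (e10.trans e20.symm : x₁ 0 = x₂ 0)
      · exact (e11.trans e21.symm : x₁ 1 = x₂ 1)
    · rw [q11 _ e10 e11, q1m _ e20 e21, hA]; exact min_le_left _ _
    · rw [q11 _ e10 e11, qm1 _ e20 e21, hB]; exact min_le_right _ _
    · rw [q11 _ e10 e11, qmm _ e20 e21, hC]
      exact le_trans (min_le_left _ _) hKle
    · rw [q1m _ e10 e11, q11 _ e20 e21, hammingDist_comm, hA]; exact min_le_left _ _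
    · refine absurd (funext fun j => ?_) hne
      fin_cases j
      · exact (e10.trans e20.symm : x₁ 0 = x₂ 0)
      · exact (e11.trans e21.symm : x₁ 1 = x₂ 1)
    · rw [q1m _ e10 e11, qm1 _ e20 e21, hD]
      exact le_trans (min_le_left _ _) hKle
    · rw [q1m _ e10 e11, qmm _ e20 e21, hE]; exact min_le_right _ _
    · rw [qm1 _ e10 e11, q11 _ e20 e21, hammingDist_comm, hB]; exact min_le_right _ _
    · rw [qm1 _ e10 e11, q1m _ e20 e21, hammingDist_comm, hD]
      exact le_trans (min_le_left _ _) hKle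
    · refine absurd (funext fun j => ?_) hne
      fin_cases j
      · exact (e10.trans e20.symm : x₁ 0 = x₂ 0)
      · exact (e11.trans e21.symm : x₁ 1 = x₂ 1)
    · rw [qm1 _ e10 e11, qmm _ e20 e21, hF]; exact min_le_left _ _
    · rw [qmm _ e10 e11, q11 _ e20 e21, hammingDist_comm, hC]
      exact le_trans (min_le_left _ _) hKle
    · rw [qmm _ e10 e11, q1m _ e20 e21, hammingDist_comm, hE]; exact min_le_right _ _
    · rw [qmm _ e10 e11, qm1 _ e20 e21, hammingDist_comm, hF]; exact min_le_left _ _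
    · refine absurd (funext fun j => ?_) hne
      fin_cases j
      · exact (e10.trans e20.symm : x₁ 0 = x₂ 0)
      · exact (e11.trans e21.symm : x₁ 1 = x₂ 1)
  have hSne : S.Nonempty := ⟨K, mem1⟩
  refine le_antisymm (le_min (Nat.sInf_le mem1) (Nat.sInf_le mem2)) ?_
  exact lb _ (Nat.sInf_mem hSne)

def Tset (Nr n : ℕ) : Set (Idx Nr → Bool) := {f | n ≤ cnt f ∧ n + cnt f ≤ Nr + Nr}

lemma event_eq_on_G {n : ℕ} {ω : Fin Nr × Fin 2 × Bool → ℝ} (hω : ω ∈ Gset Nr) :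
    (n ≤ dmin Nr ω) ↔ (φB Nr ω ∈ Tset Nr n) := by
  rw [dmin_eq_on_G hω, le_min_iff]
  have := cnt_le (φB Nr ω)
  simp only [Tset, Set.mem_setOf_eq]
  omega

lemma pw_measurable : Measurable (fun (g : Idx Nr → ℝ × ℝ) (l : Idx Nr) => ψb (g l)) :=
  measurable_pi_lambda _ (fun l => measurable_psi.comp (measurable_pi_apply l))

open scoped Classical in
lemma measure_preimage_T (Nr n : ℕ) :
    (Measure.pi fun _ : Fin Nr × Fin 2 × Bool => gν) (φB Nr ⁻¹' Tset Nr n)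
      = ((Finset.univ.filter fun f : Idx Nr → Bool => f ∈ Tset Nr n).card : ℝ≥0∞)
        * 2⁻¹ ^ (Nr + Nr) := by
  have hTmeas : MeasurableSet
      ((fun (g : Idx Nr → ℝ × ℝ) (l : Idx Nr) => ψb (g l)) ⁻¹' Tset Nr n) :=
    pw_measurable ((Set.to_countable (Tset Nr n)).measurableSet)
  have hpre : φB Nr ⁻¹' Tset Nr n
      = Φm Nr ⁻¹' ((fun (g : Idx Nr → ℝ × ℝ) (l : Idx Nr) => ψb (g l)) ⁻¹' Tset Nr n) := rfl
  rw [hpre, measurePreserving_Φm.measure_preimage hTmeas.nullMeasurableSet]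
  have hdecomp : ((fun (g : Idx Nr → ℝ × ℝ) (l : Idx Nr) => ψb (g l)) ⁻¹' Tset Nr n)
      = ⋃ f ∈ (Finset.univ.filter fun f : Idx Nr → Bool => f ∈ Tset Nr n),
          Set.pi Set.univ (fun l => ψb ⁻¹' {f l}) := by
    ext g
    simp only [Set.mem_preimage, Set.mem_iUnion, Finset.mem_filter, Finset.mem_univ, true_and,
      Set.mem_pi, Set.mem_univ, forall_true_left, Set.mem_singleton_iff]
    constructor
    · intro hg
      exact ⟨fun l => ψb (g l), hg, fun l => rfl⟩
    · rintro ⟨f, hf, hfl⟩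
      have hfe : (fun l => ψb (g l)) = f := funext hfl
      rw [hfe]; exact hf
  rw [hdecomp, measure_biUnion_finset ?disj ?meas]
  case disj =>
    intro f hf g hg hfg
    simp only [Function.onFun]
    rw [Set.disjoint_left]
    intro a haf hag
    apply hfg
    funext l
    have h1 := haf l (Set.mem_univ l)
    have h2 := hag l (Set.mem_univ l)
    simp only [Set.mem_preimage, Set.mem_singleton_iff] at h1 h2
    rw [← h1, ← h2]
  case meas =>
    intro f _
    exact MeasurableSet.univ_pi (fun l => measSet_psi (f l))
  have hterm : ∀ f : Idx Nr → Bool,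
      (Measure.pi fun _ : Idx Nr => gν2) (Set.pi Set.univ fun l => ψb ⁻¹' {f l})
        = 2⁻¹ ^ (Nr + Nr) := by
    intro f
    rw [Measure.pi_pi]
    rw [Finset.prod_congr rfl (fun l _ => psi_half (f l)), Finset.prod_const]
    congr 1
    rw [Finset.card_univ]; simp [Fintype.card_sum]
  rw [Finset.sum_congr rfl (fun f _ => hterm f), Finset.sum_const, nsmul_eq_mul]

open scoped Classical in
lemma card_cnt_eq (Nr k : ℕ) :
    (Finset.univ.filter fun f : Idx Nr → Bool => cnt f = k).card = (Nr + Nr).choose k := by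
  have hpc : ((Finset.univ : Finset (Idx Nr)).powersetCard k).card = (Nr + Nr).choose k := by
    rw [Finset.card_powersetCard, Finset.card_univ]; simp [Fintype.card_sum]
  rw [← hpc]
  apply Finset.card_bij (fun f _ => Finset.univ.filter fun l => f l = true)
  · intro f hf
    rw [Finset.mem_powersetCard]
    refine ⟨Finset.filter_subset _ _, ?_⟩
    rw [Finset.mem_filter] at hf
    exact hf.2
  · intro f hf g hg hfg
    funext l
    have := Finset.ext_iff.mp hfg l
    simp only [Finset.mem_filter, Finset.mem_univ, true_and] at this
    exact Bool.eq_iff_iff.mpr this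
  · intro t ht
    rw [Finset.mem_powersetCard] at ht
    refine ⟨fun l => decide (l ∈ t), ?_, ?_⟩
    · rw [Finset.mem_filter]
      refine ⟨Finset.mem_univ _, ?_⟩
      rw [cnt, ← ht.2]
      congr 1
      ext l
      simp
    · ext l
      simp

open scoped Classical in
lemma card_T (Nr n : ℕ) :
    (Finset.univ.filter fun f : Idx Nr → Bool => f ∈ Tset Nr n).card
      = ∑ k ∈ Finset.Icc n ((Nr + Nr) - n), (Nr + Nr).choose k := by
  rw [Finset.card_eq_sum_card_fiberwise (f := cnt) (t := Finset.Icc n ((Nr + Nr) - n)) ?hmem]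
  case hmem =>
    intro f hf
    rw [Finset.mem_coe, Finset.mem_filter] at hf
    have h := hf.2
    simp only [Tset, Set.mem_setOf_eq] at h
    rw [Finset.mem_coe, Finset.mem_Icc]
    omega
  apply Finset.sum_congr rfl
  intro k hk
  rw [Finset.mem_Icc] at hk
  rw [← card_cnt_eq Nr k]
  congr 1
  ext f
  simp only [Finset.mem_filter, Finset.mem_univ, true_and, Tset, Set.mem_setOf_eq]
  constructor
  · rintro ⟨_, h⟩; exact h
  · intro h
    have hle := cnt_le f
    refine ⟨⟨?_, ?_⟩, h⟩ <;> omega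

end DminCor

open DminCor in
/-- Corollary 1: for `N_t = 2` and a Rayleigh-fading channel (i.i.d. standard complex
Gaussian entries), the exact CCDF of `d_min` is
`P(d_min ≥ n) = Σ_{k=n}^{2N_r − n} C(2N_r, k) · 2^{−2N_r}` for every `n ≥ 0`. -/
theorem dmin_ccdf_two_transmit_antennas (Nr : ℕ) (n : ℕ) :
    (Measure.pi fun _ : Fin Nr × Fin 2 × Bool => gaussianReal 0 (1 / 2 : NNReal))
        {ω | n ≤ dmin Nr ω} =
      ENNReal.ofReal (∑ k ∈ Finset.Icc n (2 * Nr - n),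
        ((2 * Nr).choose k : ℝ) / 2 ^ (2 * Nr)) := by
  classical
  have hGnull : (Measure.pi fun _ : Fin Nr × Fin 2 × Bool => gaussianReal 0 (1 / 2 : NNReal))
      (Gset Nr)ᶜ = 0 := by
    have hsub : (Gset Nr)ᶜ ⊆ ⋃ l : Idx Nr,
        ({ω : Fin Nr × Fin 2 × Bool → ℝ | (Φm Nr ω l).1 + (Φm Nr ω l).2 = 0}
          ∪ {ω : Fin Nr × Fin 2 × Bool → ℝ | (Φm Nr ω l).1 - (Φm Nr ω l).2 = 0}) := by
      intro ω hω
      simp only [Gset, Set.mem_compl_iff, Set.mem_setOf_eq, not_forall] at hω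
      obtain ⟨l, hl⟩ := hω
      rw [not_and_or, not_not, not_not] at hl
      exact Set.mem_iUnion.mpr ⟨l, hl⟩
    exact measure_mono_null hsub
      (measure_iUnion_null fun l => measure_union_null (null_sum l) (null_diff l))
  have hae : {ω : Fin Nr × Fin 2 × Bool → ℝ | n ≤ dmin Nr ω}
      =ᵐ[Measure.pi fun _ : Fin Nr × Fin 2 × Bool => gaussianReal 0 (1 / 2 : NNReal)]
      (φB Nr ⁻¹' Tset Nr n) := by
    rw [Filter.eventuallyEq_set]
    have hG : Gset Nr ∈ ae (Measure.pi fun _ : Fin Nr × Fin 2 × Bool =>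
        gaussianReal 0 (1 / 2 : NNReal)) := mem_ae_iff.mpr hGnull
    exact Filter.eventually_of_mem hG (fun ω hω => event_eq_on_G hω)
  rw [measure_congr hae]
  rw [show (Measure.pi fun _ : Fin Nr × Fin 2 × Bool => gaussianReal 0 (1 / 2 : NNReal))
      = (Measure.pi fun _ : Fin Nr × Fin 2 × Bool => gν) from rfl]
  rw [measure_preimage_T Nr n, card_T Nr n]
  rw [two_mul Nr, ← Finset.sum_div, ENNReal.ofReal_div_of_pos (by positivity),
    ← Nat.cast_sum, ENNReal.ofReal_natCast,
    ENNReal.ofReal_pow (by norm_num : (0:ℝ) ≤ 2), ENNReal.ofReal_ofNat,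
    div_eq_mul_inv, ENNReal.inv_pow]
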